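/- Let T be a nonempty finite set, and for each p ∈ T let (t_{n,p})_{n∈ℕ} be a sequence of positive real numbers with t_{n,p} → 0 as n → ∞. Then there exist a strictly increasing function φ : ℕ → ℕ, a function rep : T → T, positive rational numbers α(p) and positive real numbers c(p) for p ∈ T, such that: (a) rep ∘ rep = rep; (b) whenever p, q ∈ T are such that there exist a positive rational γ and constants 0 < c₀ ≤ C₀ with c₀ ≤ t_{n,p}^γ/t_{n,q} ≤ C₀ for all sufficiently large n, one has rep(p) = rep(q); and (c) for every p ∈ T, t_{φ(n),p}/(t_{φ(n),rep(p)})^{α(p)} → c(p) as n → ∞. -/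
import Mathlib


open Filter

private lemma bw_list {T : Type*} (l : List T) (r : T → ℕ → ℝ)
    (hb : ∀ p, ∃ M, ∀ n, |r p n| ≤ M) :
    ∃ φ : ℕ → ℕ, StrictMono φ ∧
      ∀ p ∈ l, ∃ c, Tendsto (fun n => r p (φ n)) atTop (nhds c) := by
  induction l with
  | nil => exact ⟨id, strictMono_id, by simp⟩
  | cons p l ih =>
    obtain ⟨φ, hφ, hl⟩ := ih
    obtain ⟨M, hM⟩ := hb p
    have hmem : ∀ n, r p (φ n) ∈ Set.Icc (-M) M := fun n => abs_le.mp (hM _)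
    obtain ⟨a, -, ψ, hψ, ha⟩ :=
      tendsto_subseq_of_bounded (Metric.isBounded_Icc (-M) M) hmem
    refine ⟨φ ∘ ψ, hφ.comp hψ, ?_⟩
    intro q hq
    rcases List.mem_cons.mp hq with h | h
    · subst h; exact ⟨a, ha⟩
    · obtain ⟨c, hc⟩ := hl q h
      exact ⟨c, hc.comp hψ.tendsto_atTop⟩

/-- Subsequence-extraction step in the proof of Corollary 5.3: a finite family of positive
null sequences can be partitioned (via an idempotent map `rep` onto class representatives,
compatible with comparability of rates) so that, after passing to a subsequence, each
parameter is asymptotic to a positive rational power of its class representative times a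
positive constant. -/
theorem subsequence_rate_classes {T : Type*} [Fintype T] [Nonempty T]
    (t : ℕ → T → ℝ) (hpos : ∀ n p, 0 < t n p)
    (h0 : ∀ p, Tendsto (fun n => t n p) atTop (nhds 0)) :
    ∃ φ : ℕ → ℕ, StrictMono φ ∧
    ∃ rep : T → T, ∃ α : T → ℚ, ∃ c : T → ℝ,
      (∀ p, 0 < α p) ∧ (∀ p, 0 < c p) ∧
      rep ∘ rep = rep ∧
      (∀ p q : T,
        (∃ γ : ℚ, 0 < γ ∧ ∃ c₀ C₀ : ℝ, 0 < c₀ ∧ c₀ ≤ C₀ ∧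
          ∀ᶠ n in atTop, c₀ ≤ (t n p) ^ (γ : ℝ) / t n q ∧ (t n p) ^ (γ : ℝ) / t n q ≤ C₀) →
        rep p = rep q) ∧
      (∀ p, Tendsto (fun n => t (φ n) p / (t (φ n) (rep p)) ^ ((α p : ℝ)))
        atTop (nhds (c p))) := by
  classical
  set v : ℕ → T → ℝ := fun n p => Real.log (t n p) with hv
  -- the comparability relation from the statement
  set R : T → T → Prop := fun p q =>
    ∃ γ : ℚ, 0 < γ ∧ ∃ c₀ C₀ : ℝ, 0 < c₀ ∧ c₀ ≤ C₀ ∧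
      ∀ᶠ n in atTop, c₀ ≤ (t n p) ^ (γ : ℝ) / t n q ∧ (t n p) ^ (γ : ℝ) / t n q ≤ C₀
    with hR
  -- the "bounded log-difference" relation
  set B : T → T → Prop := fun p q =>
    ∃ a : ℚ, 0 < a ∧ ∃ M : ℝ, ∀ᶠ n in atTop, |v n p - (a : ℝ) * v n q| ≤ M with hB
  have hBrefl : ∀ p, B p p := by
    intro p
    exact ⟨1, one_pos, 0, Eventually.of_forall fun n => by simp⟩
  have hBsymm : ∀ p q, B p q → B q p := by
    rintro p q ⟨a, ha, M, hM⟩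
    have ha' : (0 : ℝ) < (a : ℝ) := by exact_mod_cast ha
    refine ⟨a⁻¹, by positivity, M / (a : ℝ), ?_⟩
    filter_upwards [hM] with n hn
    rw [le_div_iff₀ ha']
    have key : (v n q - ((a⁻¹ : ℚ) : ℝ) * v n p) * (a : ℝ)
        = -(v n p - (a : ℝ) * v n q) := by
      push_cast
      field_simp
      ring
    calc |v n q - ((a⁻¹ : ℚ) : ℝ) * v n p| * (a : ℝ)
        = |v n q - ((a⁻¹ : ℚ) : ℝ) * v n p| * |(a : ℝ)| := by rw [abs_of_pos ha']
      _ = |(v n q - ((a⁻¹ : ℚ) : ℝ) * v n p) * (a : ℝ)| := (abs_mul _ _).symm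
      _ = |v n p - (a : ℝ) * v n q| := by rw [key, abs_neg]
      _ ≤ M := hn
  have hBtrans : ∀ p q s, B p q → B q s → B p s := by
    rintro p q s ⟨a, ha, M, hM⟩ ⟨b, hb, M', hM'⟩
    have ha' : (0 : ℝ) < (a : ℝ) := by exact_mod_cast ha
    refine ⟨a * b, mul_pos ha hb, M + (a : ℝ) * M', ?_⟩
    filter_upwards [hM, hM'] with n h1 h2
    have : v n p - ((a * b : ℚ) : ℝ) * v n s
        = (v n p - (a : ℝ) * v n q) + (a : ℝ) * (v n q - (b : ℝ) * v n s) := by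
      push_cast; ring
    rw [this]
    calc |(v n p - (a : ℝ) * v n q) + (a : ℝ) * (v n q - (b : ℝ) * v n s)|
        ≤ |v n p - (a : ℝ) * v n q| + |(a : ℝ) * (v n q - (b : ℝ) * v n s)| := abs_add_le _ _
      _ ≤ M + (a : ℝ) * M' := by
          rw [abs_mul, abs_of_pos ha']
          exact add_le_add h1 (mul_le_mul_of_nonneg_left h2 ha'.le)
  have hRB : ∀ p q, R p q → B q p := by
    rintro p q ⟨γ, hγ, c₀, C₀, hc₀, hcC, hev⟩
    refine ⟨γ, hγ, max |Real.log c₀| |Real.log C₀|, ?_⟩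
    filter_upwards [hev] with n hn
    have htp := hpos n p
    have htq := hpos n q
    have hx : (0 : ℝ) < (t n p) ^ (γ : ℝ) / t n q := by positivity
    have hlog : Real.log ((t n p) ^ (γ : ℝ) / t n q)
        = (γ : ℝ) * v n p - v n q := by
      rw [Real.log_div (by positivity) (ne_of_gt htq), Real.log_rpow htp]
    have h1 : Real.log c₀ ≤ (γ : ℝ) * v n p - v n q := by
      rw [← hlog]; exact Real.log_le_log hc₀ hn.1
    have h2 : (γ : ℝ) * v n p - v n q ≤ Real.log C₀ := by
      rw [← hlog]; exact Real.log_le_log hx hn.2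
    rw [abs_sub_comm]
    exact abs_le.mpr ⟨le_trans (neg_le_neg (le_max_left _ _))
      (le_trans (neg_abs_le _) h1),
      h2.trans ((le_abs_self _).trans (le_max_right _ _))⟩
  have hEB : ∀ p q, Relation.EqvGen R p q → B p q := by
    intro p q h
    induction h with
    | rel p q h => exact hBsymm _ _ (hRB p q h)
    | refl p => exact hBrefl p
    | symm p q _ ih => exact hBsymm _ _ ih
    | trans p q s _ _ ih1 ih2 => exact hBtrans _ _ _ ih1 ih2
  -- representatives of equivalence classes
  set rep : T → T := fun p => (@Quotient.mk _ (Relation.EqvGen.setoid R) p).out with hrep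
  have hrep_eqv : ∀ p, Relation.EqvGen R (rep p) p := fun p =>
    @Quotient.mk_out _ (Relation.EqvGen.setoid R) p
  have hrep_idem : rep ∘ rep = rep := by
    funext p
    show (@Quotient.mk _ (Relation.EqvGen.setoid R) (rep p)).out = rep p
    have : @Quotient.mk _ (Relation.EqvGen.setoid R) (rep p)
        = @Quotient.mk _ (Relation.EqvGen.setoid R) p :=
      Quotient.sound (hrep_eqv p)
    rw [this]
  have hrep_R : ∀ p q, R p q → rep p = rep q := by
    intro p q h
    show (@Quotient.mk _ (Relation.EqvGen.setoid R) p).out = _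
    have : @Quotient.mk _ (Relation.EqvGen.setoid R) p
        = @Quotient.mk _ (Relation.EqvGen.setoid R) q :=
      Quotient.sound (Relation.EqvGen.rel p q h)
    rw [this]
  -- each p is B-related to its representative
  have hBrep : ∀ p, B p (rep p) := fun p =>
    hEB _ _ (Relation.EqvGen.symm _ _ (hrep_eqv p))
  choose α hα M hM using hBrep
  choose N hN using fun p => (eventually_atTop.mp (hM p))
  set N₀ : ℕ := Finset.univ.sup N with hN₀
  have hNle : ∀ p n, |v (n + N₀) p - (α p : ℝ) * v (n + N₀) (rep p)| ≤ M p := by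
    intro p n
    exact hN p _ (le_trans (Finset.le_sup (Finset.mem_univ p)) (Nat.le_add_left _ _))
  set r : T → ℕ → ℝ :=
    fun p n => Real.exp (v (n + N₀) p - (α p : ℝ) * v (n + N₀) (rep p)) with hr
  have hrb : ∀ p, ∃ Mb, ∀ n, |r p n| ≤ Mb := by
    intro p
    refine ⟨Real.exp (M p), fun n => ?_⟩
    rw [abs_of_pos (Real.exp_pos _)]
    exact Real.exp_le_exp.mpr (le_trans (le_abs_self _) (hNle p n))
  obtain ⟨ψ, hψ, hconv⟩ := bw_list Finset.univ.toList r hrb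
  choose c hc using fun p => hconv p (by simp [Finset.mem_toList])
  refine ⟨fun n => ψ n + N₀, fun m n hmn => by simpa using hψ hmn,
    rep, α, c, hα, ?_, hrep_idem, hrep_R, ?_⟩
  · -- positivity of the limits
    intro p
    have hlow : ∀ n, Real.exp (-(M p)) ≤ r p (ψ n) := by
      intro n
      exact Real.exp_le_exp.mpr (neg_le_of_abs_le (hNle p (ψ n)))
    exact lt_of_lt_of_le (Real.exp_pos _) (ge_of_tendsto' (hc p) hlow)
  · -- convergence along the subsequence
    intro p
    have hEq : (fun n => t (ψ n + N₀) p / (t (ψ n + N₀) (rep p)) ^ ((α p : ℝ)))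
        = fun n => r p (ψ n) := by
      funext n
      have h1 : t (ψ n + N₀) p = Real.exp (v (ψ n + N₀) p) :=
        (Real.exp_log (hpos _ _)).symm
      have h2 : (t (ψ n + N₀) (rep p)) ^ ((α p : ℝ))
          = Real.exp ((α p : ℝ) * v (ψ n + N₀) (rep p)) := by
        rw [Real.rpow_def_of_pos (hpos _ _), mul_comm]
      rw [h1, h2, ← Real.exp_sub]
    rw [hEq]
    exact hc p
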